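/- Consider a jointly-convex GNEP in which player ν solves min_{x^ν} θ_ν(x) s.t. g(x) ≤ 0 and h(x) ≤ 0, where g : ℝ^n → ℝ^m and h : ℝ^n → ℝ^p have convex continuously differentiable components and each θ_ν is continuously differentiable and convex as a function of x^ν for every fixed x^{−ν}. Let (x^k) be generated by the variational-equilibrium augmented Lagrangian method (Algorithm 5.1) under Assumption 5.1 with ε_k → 0 and ε'_k → 0, and let x̄ be a limit point of (x^k). If the GNEP has feasible points and the concatenated map x ↦ (g(x), h(x)) satisfies the classical CPLD condition at x̄, then x̄ is feasible and solves the GNEP. -/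

import Mathlib

/-!
Along a subsequence `x (κ l + 1) → xbar` the iterates are approximate KKT points of the joint
problem: the residual `F x + ∑ λᵢ ∇gᵢ x + ∑ μⱼ ∇hⱼ x` (with `F` the pseudo-gradient) tends to zero
and the multipliers are asymptotically complementary. If the penalty parameters stay bounded they
are eventually constant, so the complementarity measure `‖min {-g, λ}‖` decays geometrically. If
they blow up, dividing the residual by `ρ` exhibits `xbar` as a KKT point of the convex problem of
minimising the infeasibility `½ ‖g₊‖²` subject to `h ≤ 0`, and the existence of a feasible point
forces `g₊ (xbar) = 0`. In both cases CPLD, through a conic Carathéodory reduction, turns the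
approximate multipliers into exact ones, and convexity makes the KKT conditions of each player's
problem sufficient for optimality.
-/

open Filter Topology Finset Function RealInnerProductSpace

/-- The strategy space of a GNEP: one Euclidean block per player. -/
abbrev Strat {N : ℕ} (n : Fin N → ℕ) := (ν : Fin N) → EuclideanSpace ℝ (Fin (n ν))

/-- Partial gradient of `f : Strat n → ℝ` with respect to player `ν`'s block at `x`. -/
noncomputable def pgrad {N : ℕ} {n : Fin N → ℕ} (ν : Fin N)
    (f : Strat n → ℝ) (x : Strat n) : EuclideanSpace ℝ (Fin (n ν)) :=
  gradient (fun z => f (Function.update x ν z)) (x ν)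

/-- Positive linear dependence of a family on a finite index set. -/
def PosLinDep {ι E : Type*} [AddCommGroup E] [Module ℝ E]
    (s : Finset ι) (v : ι → E) : Prop :=
  ∃ a : ι → ℝ, (∀ i, 0 ≤ a i) ∧ (∃ i ∈ s, a i ≠ 0) ∧ ∑ i ∈ s, a i • v i = 0

/-- Linear dependence of a family on a finite index set. -/
def LinDep {ι E : Type*} [AddCommGroup E] [Module ℝ E]
    (s : Finset ι) (v : ι → E) : Prop :=
  ∃ a : ι → ℝ, (∃ i ∈ s, a i ≠ 0) ∧ ∑ i ∈ s, a i • v i = 0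

/-- CPLD with respect to player `ν`. -/
def CPLDnu {N : ℕ} {n : Fin N → ℕ} {ι : Type*} (ν : Fin N)
    (c : ι → Strat n → ℝ) (x : Strat n) : Prop :=
  ∀ I : Finset ι, (∀ i ∈ I, c i x = 0) →
    PosLinDep I (fun i => pgrad ν (c i) x) →
    ∃ U ∈ 𝓝 x, ∀ y ∈ U, LinDep I (fun i => pgrad ν (c i) y)

/-- EMFCQ with respect to player `ν`. -/
def EMFCQnu {N : ℕ} {n : Fin N → ℕ} {ι : Type*} (ν : Fin N)
    (c : ι → Strat n → ℝ) (x : Strat n) : Prop :=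
  ∃ d : EuclideanSpace ℝ (Fin (n ν)), ∀ i, 0 ≤ c i x → inner (𝕜 := ℝ) (pgrad ν (c i) x) d < 0

section PartialGradient

variable {N : ℕ} {n : Fin N → ℕ}

noncomputable def blockGrad (f : Strat n → ℝ) (x : Strat n) : Strat n := fun ν => pgrad ν f x

noncomputable def pseudoGrad (θ : Fin N → Strat n → ℝ) (x : Strat n) : Strat n :=
  fun ν => pgrad ν (θ ν) x

variable {f : Strat n → ℝ} {x : Strat n}

lemma hasFDerivAt_comp_update (ν : Fin N) (hf : DifferentiableAt ℝ f x) :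
    HasFDerivAt (fun w => f (update x ν w))
      ((fderiv ℝ f x).comp (.pi (Pi.single ν (.id ℝ _)))) (x ν) := by
  have hf' : HasFDerivAt f (fderiv ℝ f x) (update x ν (x ν)) := by
    rw [update_eq_self]; exact hf.hasFDerivAt
  exact hf'.comp (x ν) (hasFDerivAt_update x (x ν))

lemma hasGradientAt_pgrad (ν : Fin N) (hf : DifferentiableAt ℝ f x) :
    HasGradientAt (fun w => f (update x ν w)) (pgrad ν f x) (x ν) :=
  (hasFDerivAt_comp_update ν hf).differentiableAt.hasGradientAt

lemma inner_pgrad (ν : Fin N) (hf : DifferentiableAt ℝ f x) (v : EuclideanSpace ℝ (Fin (n ν))) :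
    ⟪pgrad ν f x, v⟫ = fderiv ℝ f x (Pi.single ν v) := by
  have h := (hasGradientAt_pgrad ν hf).hasFDerivAt.unique (hasFDerivAt_comp_update ν hf)
  have hs : (fun j => (Pi.single ν (.id ℝ _) : ∀ j, _ →L[ℝ] EuclideanSpace ℝ (Fin (n j))) j v)
      = Pi.single ν v := by
    ext j : 1
    rcases eq_or_ne j ν with rfl | hj <;> simp [*]
  simpa [hs] using congrArg (· v) h

lemma fderiv_apply_eq_sum_inner_pgrad (hf : DifferentiableAt ℝ f x) (d : Strat n) :
    fderiv ℝ f x d = ∑ ν, ⟪pgrad ν f x, d ν⟫ := by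
  conv_lhs => rw [← Finset.univ_sum_single d]
  simp [inner_pgrad _ hf]

lemma continuous_pgrad (hf : ContDiff ℝ 1 f) (ν : Fin N) : Continuous (pgrad ν f) := by
  have hdiff := hf.differentiable one_ne_zero
  have h : pgrad ν f =
      fun x => (InnerProductSpace.toDual ℝ _).symm
        ((fderiv ℝ f x).comp (.pi (Pi.single ν (.id ℝ _)))) :=
    funext fun x => by rw [pgrad, gradient, (hasFDerivAt_comp_update ν (hdiff x)).fderiv]
  rw [h]
  exact (LinearIsometryEquiv.continuous _).comp
    ((hf.continuous_fderiv one_ne_zero).clm_comp continuous_const)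

lemma continuous_blockGrad (hf : ContDiff ℝ 1 f) : Continuous (blockGrad f) :=
  continuous_pi (continuous_pgrad hf)

lemma continuous_pseudoGrad {θ : Fin N → Strat n → ℝ} (hθ : ∀ ν, ContDiff ℝ 1 (θ ν)) :
    Continuous (pseudoGrad θ) :=
  continuous_pi fun ν => continuous_pgrad (hθ ν) ν

end PartialGradient

section Convexity

variable {E : Type*} [NormedAddCommGroup E] [NormedSpace ℝ E]

lemma ConvexOn.le_of_hasFDerivAt {f : E → ℝ} (hf : ConvexOn ℝ Set.univ f) {x : E} {D : E →L[ℝ] ℝ}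
    (hD : HasFDerivAt f D x) (z : E) : f x + D (z - x) ≤ f z := by
  have hD' : HasFDerivAt f D (AffineMap.lineMap x z (0 : ℝ)) := by simpa using hD
  have h := (hf.comp_affineMap (AffineMap.lineMap x z)).le_slope_of_hasDerivAt (Set.mem_univ 0)
    (Set.mem_univ 1) one_pos (hD'.comp_hasDerivAt 0 AffineMap.hasDerivAt_lineMap)
  simp only [map_sub, slope_def_field, comp_apply, AffineMap.lineMap_apply_one,
    AffineMap.lineMap_apply_zero, sub_zero, div_one] at h ⊢
  linarith

lemma sum_mul_le_sum_mul_of_sum_smul_fderiv_eq_zero {ι : Type*} {s : Finset ι}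
    {f : ι → E → ℝ} {D : ι → E →L[ℝ] ℝ} {a : ι → ℝ} {x : E}
    (hf : ∀ i ∈ s, ConvexOn ℝ Set.univ (f i)) (hD : ∀ i ∈ s, HasFDerivAt (f i) (D i) x)
    (ha : ∀ i ∈ s, 0 ≤ a i) (hsum : ∑ i ∈ s, a i • D i = 0) (z : E) :
    ∑ i ∈ s, a i * f i x ≤ ∑ i ∈ s, a i * f i z := by
  have h0 : ∑ i ∈ s, a i * D i (z - x) = 0 := by
    simpa using congrArg (fun L : E →L[ℝ] ℝ => L (z - x)) hsum
  calc ∑ i ∈ s, a i * f i x = ∑ i ∈ s, a i * (f i x + D i (z - x)) := by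
        simp only [mul_add, sum_add_distrib, h0, add_zero]
    _ ≤ ∑ i ∈ s, a i * f i z := sum_le_sum fun i hi =>
        mul_le_mul_of_nonneg_left ((hf i hi).le_of_hasFDerivAt (hD i hi) z) (ha i hi)

end Convexity

section Stationarity

variable {N : ℕ} {n : Fin N → ℕ} {ι : Type*} {s : Finset ι} {f : ι → Strat n → ℝ}
  {a : ι → ℝ} {x : Strat n}

lemma ConvexOn.comp_update {g : Strat n → ℝ} (hg : ConvexOn ℝ Set.univ g) (x : Strat n)
    (ν : Fin N) : ConvexOn ℝ Set.univ (fun w => g (update x ν w)) := by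
  refine ⟨convex_univ, fun z₁ _ z₂ _ a b ha hb hab => ?_⟩
  have h : update x ν (a • z₁ + b • z₂) = a • update x ν z₁ + b • update x ν z₂ := by
    ext j : 1
    rcases eq_or_ne j ν with rfl | hj
    · simp
    · simp [update_of_ne hj, Convex.combo_self hab]
  simpa only [h] using hg.2 (Set.mem_univ _) (Set.mem_univ _) ha hb hab

lemma sum_mul_le_sum_mul_of_sum_smul_blockGrad_eq_zero
    (hf : ∀ i ∈ s, ConvexOn ℝ Set.univ (f i)) (hd : ∀ i ∈ s, DifferentiableAt ℝ (f i) x)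
    (ha : ∀ i ∈ s, 0 ≤ a i) (hsum : ∑ i ∈ s, a i • blockGrad (f i) x = 0) (z : Strat n) :
    ∑ i ∈ s, a i * f i x ≤ ∑ i ∈ s, a i * f i z := by
  refine sum_mul_le_sum_mul_of_sum_smul_fderiv_eq_zero hf (fun i hi => (hd i hi).hasFDerivAt)
    ha ?_ z
  ext d
  calc (∑ i ∈ s, a i • fderiv ℝ (f i) x) d
      = ∑ ν, ⟪(∑ i ∈ s, a i • blockGrad (f i) x) ν, d ν⟫ := by
        simp only [FunLike.coe_sum, Finset.sum_apply, smul_apply, smul_eq_mul, Pi.smul_apply,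
          sum_inner, real_inner_smul_left]
        rw [sum_comm]
        exact sum_congr rfl fun i hi => by
          rw [fderiv_apply_eq_sum_inner_pgrad (hd i hi), mul_sum]; rfl
    _ = 0 := by rw [hsum]; simp

lemma sum_mul_le_sum_mul_update_of_sum_smul_pgrad_eq_zero (ν : Fin N)
    (hf : ∀ i ∈ s, ConvexOn ℝ Set.univ (fun w => f i (update x ν w)))
    (hd : ∀ i ∈ s, DifferentiableAt ℝ (f i) x) (ha : ∀ i ∈ s, 0 ≤ a i)
    (hsum : ∑ i ∈ s, a i • pgrad ν (f i) x = 0) (z : EuclideanSpace ℝ (Fin (n ν))) :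
    ∑ i ∈ s, a i * f i x ≤ ∑ i ∈ s, a i * f i (update x ν z) := by
  have h := sum_mul_le_sum_mul_of_sum_smul_fderiv_eq_zero hf
    (fun i hi => (hasGradientAt_pgrad ν (hd i hi)).hasFDerivAt) ha ?_ z
  · simpa using h
  · simp [← map_smul, ← map_sum, hsum]

end Stationarity

section Caratheodory

variable {ι E : Type*} [AddCommGroup E] [Module ℝ E] [DecidableEq ι] {w : ι → E}

lemma exists_sum_erase_smul_eq_of_linDep {I : Finset ι} (hdep : LinDep I w) {a : ι → ℝ}
    (ha : ∀ i ∈ I, 0 ≤ a i) :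
    ∃ i₀ ∈ I, ∃ a' : ι → ℝ, (∀ i ∈ I, 0 ≤ a' i) ∧
      ∑ i ∈ I.erase i₀, a' i • w i = ∑ i ∈ I, a i • w i := by
  obtain ⟨c, ⟨i₁, hi₁, hc₁⟩, hc⟩ := hdep
  wlog hpos : ∃ i ∈ I, 0 < c i generalizing c
  · push Not at hpos
    refine this (-c) (by simp [hc]) (neg_ne_zero.2 hc₁) ⟨i₁, hi₁, ?_⟩
    simpa using lt_of_le_of_ne (hpos i₁ hi₁) hc₁
  obtain ⟨i₀, hi₀T, hmin⟩ := (I.filter (0 < c ·)).exists_min_image (fun i => a i / c i)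
    (by obtain ⟨i, hi, h⟩ := hpos; exact ⟨i, mem_filter.2 ⟨hi, h⟩⟩)
  obtain ⟨hi₀, hc₀⟩ := mem_filter.1 hi₀T
  set t := a i₀ / c i₀
  have ht : 0 ≤ t := div_nonneg (ha i₀ hi₀) hc₀.le
  refine ⟨i₀, hi₀, fun i => a i - t * c i, fun i hi => ?_, ?_⟩
  · rcases lt_or_ge 0 (c i) with hci | hci
    · have h := hmin i (mem_filter.2 ⟨hi, hci⟩)
      rw [le_div_iff₀ hci] at h
      linarith
    · nlinarith [ha i hi]
  · rw [sum_erase _ (by simp [t, div_mul_cancel₀ _ hc₀.ne'])]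
    simp [sub_smul, sum_sub_distrib, mul_smul, ← smul_sum, hc]

/-- Conic Carathéodory theorem. -/
lemma exists_subset_sum_smul_eq_not_linDep (I : Finset ι) (a : ι → ℝ) (ha : ∀ i ∈ I, 0 ≤ a i) :
    ∃ J ⊆ I, ∃ d : ι → ℝ, (∀ i ∈ J, 0 ≤ d i) ∧
      ∑ i ∈ J, d i • w i = ∑ i ∈ I, a i • w i ∧ ¬ LinDep J w := by
  induction I using Finset.strongInduction generalizing a with
  | H I ih =>
    by_cases hdep : LinDep I w
    · obtain ⟨i₀, hi₀, a', ha', hsum⟩ := exists_sum_erase_smul_eq_of_linDep hdep ha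
      obtain ⟨J, hJ, d, hd, hdsum, hind⟩ :=
        ih _ (erase_ssubset hi₀) a' fun i hi => ha' i (mem_of_mem_erase hi)
      exact ⟨J, hJ.trans (erase_subset _ _), d, hd, hdsum.trans hsum, hind⟩
    · exact ⟨I, subset_rfl, a, ha, rfl, hdep⟩

end Caratheodory

section ApproximateKKT

variable {ι X E : Type*} [TopologicalSpace X] [NormedAddCommGroup E] [NormedSpace ℝ E]
  {v : ι → X → E} {xbar : X} {y : ℕ → X} {G : ℕ → E} {G' : E}

-- normalising `(1, d k)` treats bounded and unbounded multipliers at once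
lemma exists_subseq_tendsto_normalized [Finite ι] (J : Finset ι) {d : ℕ → ι → ℝ}
    (hd : ∀ k, ∀ i ∈ J, 0 ≤ d k i) :
    ∃ α : ℝ, ∃ β : ι → ℝ, 0 ≤ α ∧ (∀ i, 0 ≤ β i) ∧ α + ∑ i ∈ J, β i = 1 ∧
      ∃ φ : ℕ → ℕ, StrictMono φ ∧
        Tendsto (fun k => (1 + ∑ j ∈ J, d (φ k) j)⁻¹) atTop (𝓝 α) ∧
        ∀ i ∈ J, Tendsto (fun k => d (φ k) i / (1 + ∑ j ∈ J, d (φ k) j)) atTop (𝓝 (β i)) := by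
  classical
  set s : ℕ → ℝ := fun k => 1 + ∑ j ∈ J, d k j
  have hs : ∀ k, 1 ≤ s k := fun k => le_add_of_nonneg_right (sum_nonneg (hd k))
  set p : ℕ → ℝ × (ι → ℝ) := fun k => ((s k)⁻¹, fun i => if i ∈ J then d k i / s k else 0)
  set K := Set.Icc (0 : ℝ) 1 ×ˢ Set.univ.pi fun _ : ι => Set.Icc (0 : ℝ) 1
  have hpK : ∀ k, p k ∈ K := by
    intro k
    have hs₀ := zero_lt_one.trans_le (hs k)
    refine ⟨⟨(inv_pos.2 hs₀).le, inv_le_one_of_one_le₀ (hs k)⟩, Set.mem_univ_pi.2 fun i => ?_⟩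
    by_cases hi : i ∈ J
    · simp only [p, if_pos hi]
      exact ⟨div_nonneg (hd k i hi) hs₀.le, (div_le_one hs₀).2
        ((single_le_sum (hd k) hi).trans (le_add_of_nonneg_left zero_le_one))⟩
    · simp [p, hi]
  obtain ⟨⟨α, β⟩, ⟨⟨hα, -⟩, hβ⟩, φ, hφ, hlim⟩ :=
    (isCompact_Icc.prod (isCompact_univ_pi fun _ => isCompact_Icc)).tendsto_subseq hpK
  have hαlim : Tendsto (fun k => (s (φ k))⁻¹) atTop (𝓝 α) := (continuous_fst.tendsto _).comp hlim
  have hβlim : ∀ i ∈ J, Tendsto (fun k => d (φ k) i / s (φ k)) atTop (𝓝 (β i)) := fun i hi =>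
    ((((continuous_apply i).comp continuous_snd).tendsto _).comp hlim).congr fun k => by
      simp [p, hi]
  have hsum : ∀ k, (s k)⁻¹ + ∑ i ∈ J, d k i / s k = 1 := fun k => by
    rw [← sum_div, inv_eq_one_div, ← add_div, div_self (zero_lt_one.trans_le (hs k)).ne']
  refine ⟨α, β, hα, fun i => (Set.mem_univ_pi.1 hβ i).1, ?_, φ, hφ, hαlim, hβlim⟩
  exact tendsto_nhds_unique (hαlim.add (tendsto_finsetSum _ hβlim)) (by simp [hsum])

lemma exists_nonneg_add_sum_smul_eq_zero_of_tendsto [Finite ι] (J : Finset ι)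
    (hv : ∀ i ∈ J, ContinuousAt (v i) xbar)
    (hcpld : PosLinDep J (v · xbar) → ∀ᶠ z in 𝓝 xbar, LinDep J (v · z))
    (hy : Tendsto y atTop (𝓝 xbar)) (hind : ∀ k, ¬ LinDep J (v · (y k)))
    (hG : Tendsto G atTop (𝓝 G')) {d : ℕ → ι → ℝ} (hd : ∀ k, ∀ i ∈ J, 0 ≤ d k i)
    (hres : Tendsto (fun k => G k + ∑ i ∈ J, d k i • v i (y k)) atTop (𝓝 0)) :
    ∃ β : ι → ℝ, (∀ i ∈ J, 0 ≤ β i) ∧ G' + ∑ i ∈ J, β i • v i xbar = 0 := by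
  obtain ⟨α, β, hα0, hβ0, hsum, φ, hφ, hα, hβ⟩ := exists_subseq_tendsto_normalized J hd
  have hφ' := hφ.tendsto_atTop
  have hcomb : α • G' + ∑ i ∈ J, β i • v i xbar = 0 := by
    set s : ℕ → ℝ := fun k => 1 + ∑ j ∈ J, d k j
    have h₀ : Tendsto (fun k => (s (φ k))⁻¹ • (G (φ k) + ∑ i ∈ J, d (φ k) i • v i (y (φ k))))
        atTop (𝓝 0) := by
      simpa using hα.smul (hres.comp hφ')
    have h₁ : Tendsto (fun k => (s (φ k))⁻¹ • (G (φ k) + ∑ i ∈ J, d (φ k) i • v i (y (φ k))))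
        atTop (𝓝 (α • G' + ∑ i ∈ J, β i • v i xbar)) := by
      simp only [smul_add, smul_sum, smul_smul, ← div_eq_inv_mul]
      exact (hα.smul (hG.comp hφ')).add
        (tendsto_finsetSum _ fun i hi => (hβ i hi).smul ((hv i hi).tendsto.comp (hy.comp hφ')))
    exact tendsto_nhds_unique h₁ h₀
  rcases hα0.eq_or_lt with rfl | hαpos
  · -- `α = 0` would make the gradients positively dependent at `xbar`, which CPLD excludes
    have hPLD : PosLinDep J (v · xbar) := by
      refine ⟨β, hβ0, exists_ne_zero_of_sum_ne_zero ?_, by simpa using hcomb⟩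
      rw [← zero_add (∑ i ∈ J, β i), hsum]
      exact one_ne_zero
    obtain ⟨k, hk⟩ := ((hy.comp hφ').eventually (hcpld hPLD)).exists
    exact absurd hk (hind _)
  · refine ⟨α⁻¹ • β, fun i _ => smul_nonneg (inv_nonneg.2 hαpos.le) (hβ0 i), ?_⟩
    have h := congrArg (α⁻¹ • ·) hcomb
    simpa [smul_add, smul_sum, smul_smul, inv_mul_cancel₀ hαpos.ne'] using h

lemma exists_nonneg_add_sum_smul_eq_zero_of_cpld [Fintype ι] [DecidableEq ι] (A : Finset ι)
    (hv : ∀ i, ContinuousAt (v i) xbar)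
    (hcpld : ∀ J ⊆ A, PosLinDep J (v · xbar) → ∀ᶠ z in 𝓝 xbar, LinDep J (v · z))
    (hy : Tendsto y atTop (𝓝 xbar)) (hG : Tendsto G atTop (𝓝 G')) {b : ℕ → ι → ℝ}
    (hbA : ∀ i ∈ A, Tendsto (fun k => min (b k i) 0) atTop (𝓝 0))
    (hbAc : ∀ i ∉ A, Tendsto (fun k => b k i) atTop (𝓝 0))
    (hres : Tendsto (fun k => G k + ∑ i, b k i • v i (y k)) atTop (𝓝 0)) :
    ∃ J ⊆ A, ∃ β : ι → ℝ, (∀ i ∈ J, 0 ≤ β i) ∧ G' + ∑ i ∈ J, β i • v i xbar = 0 := by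
  -- only the nonnegative parts of the multipliers on `A` go through the Carathéodory reduction
  set H : ℕ → E := fun k =>
    G k + (∑ i ∈ A, min (b k i) 0 • v i (y k) + ∑ i ∈ Aᶜ, b k i • v i (y k))
  have hH : Tendsto H atTop (𝓝 G') := by
    have hvy : ∀ i, Tendsto (fun k => v i (y k)) atTop (𝓝 (v i xbar)) :=
      fun i => (hv i).tendsto.comp hy
    simpa using hG.add ((tendsto_finsetSum _ fun i hi => (hbA i hi).smul (hvy i)).add
      (tendsto_finsetSum _ fun i hi => (hbAc i (mem_compl.1 hi)).smul (hvy i)))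
  have hHres : ∀ k, H k + ∑ i ∈ A, max (b k i) 0 • v i (y k) = G k + ∑ i, b k i • v i (y k) := by
    intro k
    rw [← sum_add_sum_compl A, add_assoc, add_right_comm _ (∑ i ∈ Aᶜ, _), ← sum_add_distrib]
    simp only [← add_smul, min_add_max, add_zero]
  choose J hJA d hd hdsum hind using fun k =>
    exists_subset_sum_smul_eq_not_linDep (w := (v · (y k))) A (fun i => max (b k i) 0)
      fun i _ => le_max_right _ _
  obtain ⟨J₀, hJ₀⟩ : ∃ J₀, ∃ᶠ k in atTop, J k = J₀ :=
    frequently_exists.1 (Frequently.of_forall fun k => ⟨J k, rfl⟩)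
  obtain ⟨φ, hφ, hφJ⟩ := extraction_of_frequently_atTop hJ₀
  have hJ₀A : J₀ ⊆ A := hφJ 0 ▸ hJA (φ 0)
  refine ⟨J₀, hJ₀A, exists_nonneg_add_sum_smul_eq_zero_of_tendsto J₀ (fun i _ => hv i)
    (hcpld J₀ hJ₀A) (hy.comp hφ.tendsto_atTop) (fun k => hφJ k ▸ hind (φ k))
    (hH.comp hφ.tendsto_atTop) (d := fun k => d (φ k)) (fun k => hφJ k ▸ hd (φ k)) ?_⟩
  refine (hres.comp hφ.tendsto_atTop).congr fun k => ?_
  simp only [Function.comp_apply, ← hHres, ← hφJ k, hdsum]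

end ApproximateKKT

section RealSequences

variable {a b u r : ℕ → ℝ} {a' : ℝ}

lemma nonpos_of_tendsto_min_neg (ha : Tendsto a atTop (𝓝 a'))
    (hmin : Tendsto (fun k => min (-a k) (b k)) atTop (𝓝 0)) : a' ≤ 0 := by
  have h := le_of_tendsto_of_tendsto' hmin ha.neg fun k => min_le_left _ _
  linarith

lemma tendsto_zero_of_tendsto_min_neg (ha' : a' < 0) (ha : Tendsto a atTop (𝓝 a'))
    (hmin : Tendsto (fun k => min (-a k) (b k)) atTop (𝓝 0)) : Tendsto b atTop (𝓝 0) := by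
  refine hmin.congr' ?_
  filter_upwards [ha.neg.eventually (lt_mem_nhds (by linarith : -a' / 2 < -a')),
    hmin.eventually (gt_mem_nhds (by linarith : (0 : ℝ) < -a' / 2))] with k hk₁ hk₂
  refine min_eq_right (le_of_not_gt fun h => ?_)
  rw [min_eq_left h.le] at hk₂
  linarith

lemma abs_min_zero_le_abs_min_neg (x y : ℝ) : |min y 0| ≤ |min (-x) y| := by
  rcases le_total 0 y with hy | hy
  · simp [min_eq_right hy]
  · rw [min_eq_left hy, abs_of_nonpos hy]
    exact (neg_le_neg (min_le_right _ _)).trans (neg_le_abs _)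

lemma tendsto_min_zero_of_tendsto_min_neg
    (hmin : Tendsto (fun k => min (-a k) (b k)) atTop (𝓝 0)) :
    Tendsto (fun k => min (b k) 0) atTop (𝓝 0) :=
  squeeze_zero_norm (fun k => abs_min_zero_le_abs_min_neg (a k) (b k)) (by simpa using hmin.abs)

lemma tendsto_max_add_mul_of_neg {U : ℝ} (hu : ∀ k, u k ≤ U) (hr : Tendsto r atTop atTop)
    (ha : Tendsto a atTop (𝓝 a')) (ha' : a' < 0) :
    Tendsto (fun k => max (u k + r k * a k) 0) atTop (𝓝 0) := by
  refine tendsto_const_nhds.congr' ?_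
  filter_upwards [(hr.atTop_mul_neg ha' ha).eventually (eventually_lt_atBot (-U))] with k hk
  exact (max_eq_right (by linarith [hu k])).symm

lemma tendsto_max_add_mul_div {U : ℝ} (hu₀ : ∀ k, 0 ≤ u k) (hu : ∀ k, u k ≤ U)
    (hr : Tendsto r atTop atTop) (ha : Tendsto a atTop (𝓝 a')) :
    Tendsto (fun k => max (u k + r k * a k) 0 / r k) atTop (𝓝 (max a' 0)) := by
  have hr₀ : ∀ᶠ k in atTop, 0 < r k := hr.eventually_gt_atTop 0
  have hur : Tendsto (fun k => u k / r k) atTop (𝓝 0) :=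
    squeeze_zero' (hr₀.mono fun k hk => div_nonneg (hu₀ k) hk.le)
      (hr₀.mono fun k hk => div_le_div_of_nonneg_right (hu k) hk.le)
      (tendsto_const_nhds.div_atTop hr)
  have h := (hur.add ha).max (tendsto_const_nhds (x := (0 : ℝ)))
  rw [zero_add] at h
  refine h.congr' (hr₀.mono fun k hk => ?_)
  dsimp only
  rw [← max_div_div_right hk.le, zero_div, add_div, mul_div_cancel_left₀ _ hk.ne']

variable {ρ V : ℕ → ℝ} {γ τ : ℝ}

lemma tendsto_zero_of_eventually_le_mul (hV : ∀ k, 0 ≤ V k) (hτ : τ ∈ Set.Ioo 0 1)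
    (h : ∀ᶠ k in atTop, V (k + 1) ≤ τ * V k) : Tendsto V atTop (𝓝 0) := by
  obtain ⟨K, hK⟩ := eventually_atTop.1 h
  rw [← tendsto_add_atTop_iff_nat K]
  refine squeeze_zero (fun j => hV _) (fun j => le_geom (u := fun j => V (j + K)) hτ.1.le j
    fun i _ => by simpa [add_right_comm] using hK (i + K) (by omega)) ?_
  simpa using (tendsto_pow_atTop_nhds_zero_of_lt_one hτ.1.le hτ.2).mul_const (V (0 + K))

def IsPenaltyUpdate (τ γ : ℝ) (V ρ : ℕ → ℝ) : Prop :=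
  ∀ k, (V (k + 1) ≤ τ * V k → ρ (k + 1) = ρ k) ∧ (¬ V (k + 1) ≤ τ * V k → ρ (k + 1) = γ * ρ k)

lemma IsPenaltyUpdate.pos (hρ : IsPenaltyUpdate τ γ V ρ) (hρ₀ : 0 < ρ 0) (hγ : 1 < γ) (k : ℕ) :
    0 < ρ k := by
  induction k with
  | zero => exact hρ₀
  | succ k ih =>
    by_cases ht : V (k + 1) ≤ τ * V k
    · rw [(hρ k).1 ht]; exact ih
    · rw [(hρ k).2 ht]; positivity

lemma IsPenaltyUpdate.monotone (hρ : IsPenaltyUpdate τ γ V ρ) (hρ₀ : 0 < ρ 0) (hγ : 1 < γ) :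
    Monotone ρ := by
  refine monotone_nat_of_le_succ fun k => ?_
  by_cases ht : V (k + 1) ≤ τ * V k
  · rw [(hρ k).1 ht]
  · rw [(hρ k).2 ht]
    nlinarith [hρ.pos hρ₀ hγ k]

/-- A bounded penalty sequence is eventually constant, so the test of the update eventually
succeeds. -/
lemma IsPenaltyUpdate.tendsto_zero_of_bddAbove (hρ : IsPenaltyUpdate τ γ V ρ) (hρ₀ : 0 < ρ 0)
    (hγ : 1 < γ) (hτ : τ ∈ Set.Ioo 0 1) (hV : ∀ k, 0 ≤ V k) (hbdd : BddAbove (Set.range ρ)) :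
    Tendsto V atTop (𝓝 0) := by
  set L := ⨆ k, ρ k
  have hlim : Tendsto ρ atTop (𝓝 L) := tendsto_atTop_ciSup (hρ.monotone hρ₀ hγ) hbdd
  have hL : 0 < (γ - 1) * L := mul_pos (sub_pos.2 hγ) (hρ₀.trans_le (le_ciSup hbdd 0))
  have hjump := ((tendsto_const_nhds.mul hlim).sub (hlim.comp (tendsto_add_atTop_nat 1))).eventually
    (lt_mem_nhds (by linarith : (0 : ℝ) < γ * L - L))
  refine tendsto_zero_of_eventually_le_mul hV hτ ?_
  filter_upwards [hjump] with k hk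
  by_contra ht
  simp only [Function.comp_apply, (hρ k).2 ht] at hk
  linarith

end RealSequences

section GNEP

variable {N : ℕ} {n : Fin N → ℕ} {ι : Type*}

noncomputable def compRes [Fintype ι] (a b : ι → ℝ) : ℝ := √(∑ i, min (-a i) (b i) ^ 2)

lemma abs_min_le_compRes [Fintype ι] (a b : ι → ℝ) (i : ι) : |min (-a i) (b i)| ≤ compRes a b :=
  Real.abs_le_sqrt (single_le_sum (fun j _ => sq_nonneg (min (-a j) (b j))) (mem_univ i))

lemma tendsto_min_of_tendsto_compRes [Fintype ι] {a b : ℕ → ι → ℝ}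
    (h : Tendsto (fun k => compRes (a k) (b k)) atTop (𝓝 0)) (i : ι) :
    Tendsto (fun k => min (-a k i) (b k i)) atTop (𝓝 0) :=
  squeeze_zero_norm (fun k => abs_min_le_compRes (a k) (b k) i) h

lemma nonpos_and_tendsto_zero_of_tendsto_compRes [Fintype ι] {a b : ℕ → ι → ℝ} {a' : ι → ℝ}
    (ha : ∀ i, Tendsto (fun k => a k i) atTop (𝓝 (a' i)))
    (h : Tendsto (fun k => compRes (a k) (b k)) atTop (𝓝 0)) :
    (∀ i, a' i ≤ 0) ∧ ∀ i, a' i < 0 → Tendsto (fun k => b k i) atTop (𝓝 0) :=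
  ⟨fun i => nonpos_of_tendsto_min_neg (ha i) (tendsto_min_of_tendsto_compRes h i),
    fun i hi => tendsto_zero_of_tendsto_min_neg hi (ha i) (tendsto_min_of_tendsto_compRes h i)⟩

lemma mem_Icc_of_safeguard {lam u : ℕ → ι → ℝ} {umax : ℝ} (humax : 0 ≤ umax)
    (hu₀ : ∀ i, u 0 i ∈ Set.Icc 0 umax) (hlam : ∀ k i, 0 ≤ lam (k + 1) i)
    (hu : ∀ k i, u (k + 1) i = min (lam (k + 1) i) umax) : ∀ k i, u k i ∈ Set.Icc 0 umax := by
  rintro (_ | k) i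
  · exact hu₀ i
  · rw [hu k i]
    exact ⟨le_min (hlam k i) humax, min_le_right _ _⟩

lemma MapClusterPt.exists_tendsto_comp_succ {X : Type*} [TopologicalSpace X]
    [FirstCountableTopology X] {x : ℕ → X} {xbar : X} (h : MapClusterPt xbar atTop x) :
    ∃ κ : ℕ → ℕ, Tendsto κ atTop atTop ∧ Tendsto (fun l => x (κ l + 1)) atTop (𝓝 xbar) := by
  obtain ⟨ψ, hψ, hlim⟩ := h.tendsto_subseq
  have hψ₁ : ∀ l, l + 1 ≤ ψ (l + 1) := fun l => hψ.id_le (l + 1)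
  refine ⟨fun l => ψ (l + 1) - 1, tendsto_atTop_mono (fun l => show l ≤ _ by have := hψ₁ l; omega)
    tendsto_id, ?_⟩
  refine (hlim.comp (tendsto_add_atTop_nat 1)).congr fun l => ?_
  simp only [Function.comp_apply]
  congr
  have := hψ₁ l
  omega

lemma nonpos_of_sum_smul_blockGrad_eq_zero {m : ℕ} {g : Fin m → Strat n → ℝ}
    {c : ι → Strat n → ℝ} {xbar : Strat n} (hg : ∀ i, ConvexOn ℝ Set.univ (g i))
    (hgd : ∀ i, DifferentiableAt ℝ (g i) xbar) (hc : ∀ s, ConvexOn ℝ Set.univ (c s))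
    (hcd : ∀ s, DifferentiableAt ℝ (c s) xbar) {J : Finset ι} (hJ : ∀ s ∈ J, c s xbar = 0)
    {β : ι → ℝ} (hβ : ∀ s ∈ J, 0 ≤ β s)
    (hstat : ∑ i, max (g i xbar) 0 • blockGrad (g i) xbar + ∑ s ∈ J, β s • blockGrad (c s) xbar
      = 0)
    {z : Strat n} (hgz : ∀ i, g i z ≤ 0) (hcz : ∀ s ∈ J, c s z ≤ 0) (i : Fin m) :
    g i xbar ≤ 0 := by
  have h := sum_mul_le_sum_mul_of_sum_smul_blockGrad_eq_zero (s := univ.disjSum J)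
    (f := Sum.elim g c) (a := Sum.elim (fun i => max (g i xbar) 0) β)
    (by rintro (i | s) -; exacts [hg i, hc s]) (by rintro (i | s) -; exacts [hgd i, hcd s])
    (by rintro (i | s) hs; exacts [le_max_right _ _, hβ s (by simpa using hs)])
    (by simpa [sum_disjSum] using hstat) z
  simp only [sum_disjSum, Sum.elim_inl, Sum.elim_inr] at h
  have hJ₀ : ∑ s ∈ J, β s * c s xbar = 0 := sum_eq_zero fun s hs => by rw [hJ s hs, mul_zero]
  have hz : ∑ i, max (g i xbar) 0 * g i z + ∑ s ∈ J, β s * c s z ≤ 0 :=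
    add_nonpos (sum_nonpos fun i _ => mul_nonpos_of_nonneg_of_nonpos (le_max_right _ _) (hgz i))
      (sum_nonpos fun s hs => mul_nonpos_of_nonneg_of_nonpos (hβ s hs) (hcz s hs))
  have hsq : ∀ i, max (g i xbar) 0 * g i xbar = max (g i xbar) 0 ^ 2 := fun i => by
    rcases le_total 0 (g i xbar) with h | h <;> simp [h, sq]
  have hsum : ∑ i, max (g i xbar) 0 ^ 2 = 0 :=
    le_antisymm (by simp only [hsq] at h; linarith) (sum_nonneg fun i _ => sq_nonneg _)
  have hi := (sum_eq_zero_iff_of_nonneg fun i _ => sq_nonneg _).1 hsum i (mem_univ i)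
  exact max_eq_right_iff.1 (pow_eq_zero_iff two_ne_zero |>.1 hi)

lemma le_update_of_pgrad_add_sum_smul_eq_zero {θ : Strat n → ℝ} {c : ι → Strat n → ℝ}
    {xbar : Strat n} (ν : Fin N) (hθ : ConvexOn ℝ Set.univ (fun w => θ (update xbar ν w)))
    (hθd : DifferentiableAt ℝ θ xbar) (hc : ∀ s, ConvexOn ℝ Set.univ (c s))
    (hcd : ∀ s, DifferentiableAt ℝ (c s) xbar) {J : Finset ι} (hJ : ∀ s ∈ J, c s xbar = 0)
    {β : ι → ℝ} (hβ : ∀ s ∈ J, 0 ≤ β s)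
    (hstat : pgrad ν θ xbar + ∑ s ∈ J, β s • pgrad ν (c s) xbar = 0)
    {z : EuclideanSpace ℝ (Fin (n ν))} (hz : ∀ s, c s (update xbar ν z) ≤ 0) :
    θ xbar ≤ θ (update xbar ν z) := by
  have h := sum_mul_le_sum_mul_update_of_sum_smul_pgrad_eq_zero ν
    (s := (univ : Finset Unit).disjSum J) (f := Sum.elim (fun _ => θ) c) (a := Sum.elim 1 β)
    (by rintro (_ | s) -; exacts [hθ, (hc s).comp_update xbar ν])
    (by rintro (_ | s) -; exacts [hθd, hcd s])
    (by rintro (_ | s) hs; exacts [zero_le_one, hβ s (by simpa using hs)])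
    (by simpa [sum_disjSum] using hstat) z
  simp only [sum_disjSum, Sum.elim_inl, Sum.elim_inr, univ_unique, sum_singleton, Pi.one_apply,
    one_mul] at h
  have hJ₀ : ∑ s ∈ J, β s * c s xbar = 0 := sum_eq_zero fun s hs => by rw [hJ s hs, mul_zero]
  have hz' : ∑ s ∈ J, β s * c s (update xbar ν z) ≤ 0 :=
    sum_nonpos fun s hs => mul_nonpos_of_nonneg_of_nonpos (hβ s hs) (hz s)
  linarith

end GNEP

section Limits

variable {N : ℕ} {n : Fin N → ℕ} {ι : Type*} [Fintype ι] {c : ι → Strat n → ℝ}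
  {xbar : Strat n} {y : ℕ → Strat n} {b : ℕ → ι → ℝ}

lemma exists_kkt_of_tendsto_approxKKT (hc : ∀ s, ContDiff ℝ 1 (c s))
    (hcpld : ∀ I : Finset ι, (∀ s ∈ I, c s xbar = 0) →
      PosLinDep I (fun s => blockGrad (c s) xbar) →
      ∃ U ∈ 𝓝 xbar, ∀ z ∈ U, LinDep I (fun s => blockGrad (c s) z))
    (hy : Tendsto y atTop (𝓝 xbar)) {G : ℕ → Strat n} {G' : Strat n}
    (hG : Tendsto G atTop (𝓝 G')) (hb : ∀ s, Tendsto (fun k => min (b k s) 0) atTop (𝓝 0))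
    (hb₀ : ∀ s, c s xbar ≠ 0 → Tendsto (fun k => b k s) atTop (𝓝 0))
    (hres : Tendsto (fun k => G k + ∑ s, b k s • blockGrad (c s) (y k)) atTop (𝓝 0)) :
    ∃ J : Finset ι, (∀ s ∈ J, c s xbar = 0) ∧ ∃ β : ι → ℝ, (∀ s ∈ J, 0 ≤ β s) ∧
      G' + ∑ s ∈ J, β s • blockGrad (c s) xbar = 0 := by
  classical
  obtain ⟨J, hJ, β, hβ, hkkt⟩ := exists_nonneg_add_sum_smul_eq_zero_of_cpld
    (univ.filter fun s => c s xbar = 0) (fun s => (continuous_blockGrad (hc s)).continuousAt)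
    (fun J hJ hpld => eventually_iff_exists_mem.2
      (hcpld J (fun s hs => (mem_filter.1 (hJ hs)).2) hpld))
    hy hG (fun s _ => hb s) (fun s hs => hb₀ s (by simpa using hs)) hres
  exact ⟨J, fun s hs => (mem_filter.1 (hJ hs)).2, β, hβ, hkkt⟩

lemma le_update_of_tendsto_approxKKT {θ : Fin N → Strat n → ℝ} (hθ : ∀ ν, ContDiff ℝ 1 (θ ν))
    (hθconv : ∀ ν, ConvexOn ℝ Set.univ (fun w => θ ν (update xbar ν w)))
    (hc : ∀ s, ContDiff ℝ 1 (c s)) (hcconv : ∀ s, ConvexOn ℝ Set.univ (c s))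
    (hcpld : ∀ I : Finset ι, (∀ s ∈ I, c s xbar = 0) →
      PosLinDep I (fun s => blockGrad (c s) xbar) →
      ∃ U ∈ 𝓝 xbar, ∀ z ∈ U, LinDep I (fun s => blockGrad (c s) z))
    (hy : Tendsto y atTop (𝓝 xbar)) (hb : ∀ s, Tendsto (fun k => min (b k s) 0) atTop (𝓝 0))
    (hb₀ : ∀ s, c s xbar ≠ 0 → Tendsto (fun k => b k s) atTop (𝓝 0))
    (hres : Tendsto (fun k => pseudoGrad θ (y k) + ∑ s, b k s • blockGrad (c s) (y k)) atTop
      (𝓝 0))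
    (ν : Fin N) {z : EuclideanSpace ℝ (Fin (n ν))} (hz : ∀ s, c s (update xbar ν z) ≤ 0) :
    θ ν xbar ≤ θ ν (update xbar ν z) := by
  obtain ⟨J, hJ, β, hβ, hkkt⟩ := exists_kkt_of_tendsto_approxKKT hc hcpld hy
    (((continuous_pseudoGrad hθ).tendsto xbar).comp hy) hb hb₀ hres
  exact le_update_of_pgrad_add_sum_smul_eq_zero ν (hθconv ν)
    ((hθ ν).differentiable one_ne_zero xbar) hcconv
    (fun s => (hc s).differentiable one_ne_zero xbar) hJ hβ
    (by simpa [pseudoGrad, blockGrad, Finset.sum_apply] using congrFun hkkt ν) hz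

lemma nonpos_of_tendsto_penalty_atTop {m p : ℕ} {θ : Fin N → Strat n → ℝ}
    {g : Fin m → Strat n → ℝ} {h : Fin p → Strat n → ℝ} (hθ : ∀ ν, ContDiff ℝ 1 (θ ν))
    (hg : ∀ i, ContDiff ℝ 1 (g i)) (hgconv : ∀ i, ConvexOn ℝ Set.univ (g i))
    (hh : ∀ j, ContDiff ℝ 1 (h j)) (hhconv : ∀ j, ConvexOn ℝ Set.univ (h j))
    (hhfeas : ∀ j, h j xbar ≤ 0)
    (hcpld : ∀ I : Finset (Fin m ⊕ Fin p), (∀ s ∈ I, Sum.elim g h s xbar = 0) →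
      PosLinDep I (fun s => blockGrad (Sum.elim g h s) xbar) →
      ∃ U ∈ 𝓝 xbar, ∀ z ∈ U, LinDep I (fun s => blockGrad (Sum.elim g h s) z))
    (hfeasible : ∃ z : Strat n, (∀ i, g i z ≤ 0) ∧ ∀ j, h j z ≤ 0)
    (hy : Tendsto y atTop (𝓝 xbar)) {lam u : ℕ → Fin m → ℝ} {mu : ℕ → Fin p → ℝ}
    {r : ℕ → ℝ} {umax : ℝ} (hr : Tendsto r atTop atTop)
    (hlam : ∀ k i, lam k i = max (u k i + r k * g i (y k)) 0)
    (hu : ∀ k i, u k i ∈ Set.Icc 0 umax)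
    (hmu : ∀ j, Tendsto (fun k => min (mu k j) 0) atTop (𝓝 0))
    (hmu₀ : ∀ j, h j xbar < 0 → Tendsto (fun k => mu k j) atTop (𝓝 0))
    (hres : Tendsto (fun k => pseudoGrad θ (y k)
      + ∑ s, Sum.elim (lam k) (mu k) s • blockGrad (Sum.elim g h s) (y k)) atTop (𝓝 0)) :
    ∀ i, g i xbar ≤ 0 := by
  have hcont : ∀ s, ContDiff ℝ 1 (Sum.elim g h s) := by rintro (i | j); exacts [hg i, hh j]
  have hblock : ∀ i, Tendsto (fun k => blockGrad (g i) (y k)) atTop (𝓝 (blockGrad (g i) xbar)) :=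
    fun i => ((continuous_blockGrad (hg i)).tendsto xbar).comp hy
  -- divided by the penalty parameter, the residual exhibits `xbar` as a KKT point of the
  -- problem of minimising the infeasibility of `g` subject to `h ≤ 0`
  have hG : Tendsto (fun k => (r k)⁻¹ • pseudoGrad θ (y k)
      + ∑ i, (lam k i / r k) • blockGrad (g i) (y k)) atTop
      (𝓝 (∑ i, max (g i xbar) 0 • blockGrad (g i) xbar)) := by
    have hθy := ((continuous_pseudoGrad hθ).tendsto xbar).comp hy
    have hlam' : ∀ i, Tendsto (fun k => lam k i / r k) atTop (𝓝 (max (g i xbar) 0)) := fun i => by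
      simp only [hlam]
      exact tendsto_max_add_mul_div (fun k => (hu k i).1) (fun k => (hu k i).2) hr
        (((hg i).continuous.tendsto xbar).comp hy)
    simpa using (hr.inv_tendsto_atTop.smul hθy).add
      (tendsto_finsetSum _ fun i _ => (hlam' i).smul (hblock i))
  have hb : ∀ s : Fin m ⊕ Fin p,
      Tendsto (fun k => min (Sum.elim 0 (fun j => mu k j / r k) s) 0) atTop (𝓝 0) := by
    rintro (i | j)
    · simp
    · refine ((hmu j).div_atTop hr).congr' ?_
      filter_upwards [hr.eventually_gt_atTop 0] with k hk
      simp only [Sum.elim_inr]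
      rw [← min_div_div_right hk.le, zero_div]
  have hb₀ : ∀ s, Sum.elim g h s xbar ≠ 0 →
      Tendsto (fun k => Sum.elim 0 (fun j => mu k j / r k) s) atTop (𝓝 0) := by
    rintro (i | j) hj
    · simp
    · exact (hmu₀ j ((hhfeas j).lt_of_ne hj)).div_atTop hr
  obtain ⟨J, hJ, β, hβ, hkkt⟩ := exists_kkt_of_tendsto_approxKKT hcont hcpld hy hG hb hb₀
    (by simpa [Fintype.sum_sum_type, smul_add, smul_sum, smul_smul, div_eq_inv_mul, add_assoc]
      using hr.inv_tendsto_atTop.smul hres)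
  obtain ⟨z, hgz, hhz⟩ := hfeasible
  exact nonpos_of_sum_smul_blockGrad_eq_zero hgconv
    (fun i => (hg i).differentiable one_ne_zero xbar) (c := Sum.elim g h)
    (by rintro (i | j); exacts [hgconv i, hhconv j])
    (fun s => (hcont s).differentiable one_ne_zero xbar) hJ hβ hkkt hgz
    (by rintro (i | j) -; exacts [hgz i, hhz j])

end Limits

theorem stmt18_general {N : ℕ} {n : Fin N → ℕ} {m p : ℕ}
    (θ : Fin N → Strat n → ℝ)
    (g : Fin m → Strat n → ℝ)
    (h : Fin p → Strat n → ℝ)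
    (hθ : ∀ ν, ContDiff ℝ 1 (θ ν))
    (hgC1 : ∀ i, ContDiff ℝ 1 (g i))
    (hgconv : ∀ i, ConvexOn ℝ Set.univ (g i))
    (hhC1 : ∀ j, ContDiff ℝ 1 (h j))
    (hhconv : ∀ j, ConvexOn ℝ Set.univ (h j))
    (x : ℕ → Strat n)
    (lam : ℕ → Fin m → ℝ)
    (mu : ℕ → Fin p → ℝ)
    (u : ℕ → Fin m → ℝ)
    (rho : ℕ → ℝ)
    (umax τ γ : ℝ)
    (humax : 0 ≤ umax)
    (hτ : τ ∈ Set.Ioo (0:ℝ) 1)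
    (hγ : 1 < γ)
    (hrho0 : 0 < rho 0)
    (hu0 : ∀ i, u 0 i ∈ Set.Icc 0 umax)
    (hlam : ∀ k i, lam (k+1) i = max (u k i + rho k * g i (x (k+1))) 0)
    (hu : ∀ k i, u (k+1) i = min (lam (k+1) i) umax)
    (hrho : ∀ k,
      (Real.sqrt (∑ i, (min (-(g i (x (k+1)))) (lam (k+1) i)) ^ 2) ≤
          τ * Real.sqrt (∑ i, (min (-(g i (x k))) (lam k i)) ^ 2) →
        rho (k+1) = rho k) ∧
      (¬ (Real.sqrt (∑ i, (min (-(g i (x (k+1)))) (lam (k+1) i)) ^ 2) ≤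
          τ * Real.sqrt (∑ i, (min (-(g i (x k))) (lam k i)) ^ 2)) →
        rho (k+1) = γ * rho k))
    (eps eps' : ℕ → ℝ)
    (heps' : Tendsto eps' atTop (𝓝 0))
    (hA1 : ∀ k ν, ‖pgrad ν (θ ν) (x (k+1))
        + ∑ i, max (u k i + rho k * g i (x (k+1))) 0 • pgrad ν (g i) (x (k+1))
        + ∑ j, mu (k+1) j • pgrad ν (h j) (x (k+1))‖ ≤ eps k)
    (hA2 : ∀ k, Real.sqrt (∑ j, (min (-(h j (x (k+1)))) (mu (k+1) j)) ^ 2) ≤ eps' k)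
    (heps : Tendsto eps atTop (𝓝 0))
    (hθconv : ∀ (ν : Fin N) (y : Strat n),
      ConvexOn ℝ Set.univ (fun z => θ ν (Function.update y ν z)))
    (hfeasible : ∃ z : Strat n, (∀ i, g i z ≤ 0) ∧ ∀ j, h j z ≤ 0)
    (xbar : Strat n)
    (hclus : MapClusterPt xbar atTop x)
    (hCPLD : ∀ I : Finset (Fin m ⊕ Fin p),
      (∀ j ∈ I, Sum.elim g h j xbar = 0) →
      PosLinDep I (fun j => (fun ν => pgrad ν (Sum.elim g h j) xbar : Strat n)) →
      ∃ U ∈ 𝓝 xbar, ∀ y ∈ U,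
        LinDep I (fun j => (fun ν => pgrad ν (Sum.elim g h j) y : Strat n))) :
    ((∀ i, g i xbar ≤ 0) ∧ (∀ j, h j xbar ≤ 0)) ∧
    ∀ (ν : Fin N) (z : EuclideanSpace ℝ (Fin (n ν))),
      (∀ i, g i (Function.update xbar ν z) ≤ 0) →
      (∀ j, h j (Function.update xbar ν z) ≤ 0) →
      θ ν xbar ≤ θ ν (Function.update xbar ν z) := by
  obtain ⟨κ, hκ, hy⟩ := hclus.exists_tendsto_comp_succ
  have hlam₀ : ∀ k i, 0 ≤ lam (k + 1) i := fun k i => by rw [hlam]; exact le_max_right _ _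
  have hu_mem := mem_Icc_of_safeguard humax hu0 hlam₀ hu
  have hpen : IsPenaltyUpdate τ γ (fun k => compRes (fun i => g i (x k)) (lam k)) rho := hrho
  have hres : Tendsto (fun l => pseudoGrad θ (x (κ l + 1)) + ∑ s, Sum.elim (lam (κ l + 1))
      (mu (κ l + 1)) s • blockGrad (Sum.elim g h s) (x (κ l + 1))) atTop (𝓝 0) :=
    tendsto_pi_nhds.2 fun ν => squeeze_zero_norm (fun l => by
      simpa [Fintype.sum_sum_type, hlam, pseudoGrad, blockGrad, add_assoc] using hA1 (κ l) ν)
      (heps.comp hκ)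
  have hgy : ∀ i, Tendsto (fun l => g i (x (κ l + 1))) atTop (𝓝 (g i xbar)) :=
    fun i => ((hgC1 i).continuous.tendsto _).comp hy
  have hhres : Tendsto (fun l => compRes (fun j => h j (x (κ l + 1))) (mu (κ l + 1))) atTop
      (𝓝 0) := squeeze_zero (fun _ => Real.sqrt_nonneg _) (fun l => hA2 (κ l)) (heps'.comp hκ)
  obtain ⟨hhfeas, hmu_lim⟩ := nonpos_and_tendsto_zero_of_tendsto_compRes
    (fun j => ((hhC1 j).continuous.tendsto _).comp hy) hhres
  have hmu_min j := tendsto_min_zero_of_tendsto_min_neg (tendsto_min_of_tendsto_compRes hhres j)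
  obtain ⟨hgfeas, hlam_lim⟩ : (∀ i, g i xbar ≤ 0) ∧
      ∀ i, g i xbar < 0 → Tendsto (fun l => lam (κ l + 1) i) atTop (𝓝 0) := by
    by_cases hbdd : BddAbove (Set.range rho)
    · exact nonpos_and_tendsto_zero_of_tendsto_compRes hgy <|
        (hpen.tendsto_zero_of_bddAbove hrho0 hγ hτ (fun _ => Real.sqrt_nonneg _) hbdd).comp
          ((tendsto_add_atTop_nat 1).comp hκ)
    · have hr := (tendsto_atTop_atTop_of_monotone' (hpen.monotone hrho0 hγ) hbdd).comp hκ
      refine ⟨nonpos_of_tendsto_penalty_atTop hθ hgC1 hgconv hhC1 hhconv hhfeas hCPLD hfeasible hy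
        hr (fun l => hlam (κ l)) (fun l => hu_mem (κ l)) hmu_min hmu_lim hres, fun i hi => ?_⟩
      exact (tendsto_max_add_mul_of_neg (fun l => (hu_mem (κ l) i).2) hr (hgy i) hi).congr
        fun l => (hlam (κ l) i).symm
  refine ⟨⟨hgfeas, hhfeas⟩, fun ν z hgz hhz => le_update_of_tendsto_approxKKT hθ
    (fun ν => hθconv ν xbar) (by rintro (i | j); exacts [hgC1 i, hhC1 j])
    (by rintro (i | j); exacts [hgconv i, hhconv j]) hCPLD hy ?_ ?_ hres ν
    (by rintro (i | j); exacts [hgz i, hhz j])⟩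
  · rintro (i | j)
    exacts [by simp [hlam₀], hmu_min j]
  · rintro (i | j) hs
    exacts [hlam_lim i ((hgfeas i).lt_of_ne hs), hmu_lim j ((hhfeas j).lt_of_ne hs)]

/-- **Theorem 5.3.** For the variational-equilibrium augmented Lagrangian
method applied to a jointly-convex GNEP with feasible points, if the concatenated map
`(g, h)` satisfies the classical CPLD at a limit point `xbar`, then `xbar` is feasible and
solves the GNEP. -/
theorem stmt18 {N : ℕ} {n : Fin N → ℕ} {m p : ℕ}
    (θ : Fin N → Strat n → ℝ)
    (g : Fin m → Strat n → ℝ)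
    (h : Fin p → Strat n → ℝ)
    (hθ : ∀ ν, ContDiff ℝ 1 (θ ν))
    (hgC1 : ∀ i, ContDiff ℝ 1 (g i))
    (hgconv : ∀ i, ConvexOn ℝ Set.univ (g i))
    (hhC1 : ∀ j, ContDiff ℝ 1 (h j))
    (hhconv : ∀ j, ConvexOn ℝ Set.univ (h j))
    (x : ℕ → Strat n)
    (lam : ℕ → Fin m → ℝ)
    (mu : ℕ → Fin p → ℝ)
    (u : ℕ → Fin m → ℝ)
    (rho : ℕ → ℝ)
    (umax τ γ : ℝ)
    (humax : 0 ≤ umax)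
    (hτ : τ ∈ Set.Ioo (0:ℝ) 1)
    (hγ : 1 < γ)
    (hrho0 : 0 < rho 0)
    (hu0 : ∀ i, u 0 i ∈ Set.Icc 0 umax)
    (hlam : ∀ k i, lam (k+1) i = max (u k i + rho k * g i (x (k+1))) 0)
    (hu : ∀ k i, u (k+1) i = min (lam (k+1) i) umax)
    (hrho : ∀ k,
      (Real.sqrt (∑ i, (min (-(g i (x (k+1)))) (lam (k+1) i)) ^ 2) ≤
          τ * Real.sqrt (∑ i, (min (-(g i (x k))) (lam k i)) ^ 2) →
        rho (k+1) = rho k) ∧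
      (¬ (Real.sqrt (∑ i, (min (-(g i (x (k+1)))) (lam (k+1) i)) ^ 2) ≤
          τ * Real.sqrt (∑ i, (min (-(g i (x k))) (lam k i)) ^ 2)) →
        rho (k+1) = γ * rho k))
    (eps eps' : ℕ → ℝ)
    (heps0 : ∀ k, 0 ≤ eps k)
    (heps'0 : ∀ k, 0 ≤ eps' k)
    (heps' : Tendsto eps' atTop (𝓝 0))
    (hA1 : ∀ k ν, ‖pgrad ν (θ ν) (x (k+1))
        + ∑ i, max (u k i + rho k * g i (x (k+1))) 0 • pgrad ν (g i) (x (k+1))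
        + ∑ j, mu (k+1) j • pgrad ν (h j) (x (k+1))‖ ≤ eps k)
    (hA2 : ∀ k, Real.sqrt (∑ j, (min (-(h j (x (k+1)))) (mu (k+1) j)) ^ 2) ≤ eps' k)
    (heps : Tendsto eps atTop (𝓝 0))
    (hθconv : ∀ (ν : Fin N) (y : Strat n),
      ConvexOn ℝ Set.univ (fun z => θ ν (Function.update y ν z)))
    (hfeasible : ∃ z : Strat n, (∀ i, g i z ≤ 0) ∧ ∀ j, h j z ≤ 0)
    (xbar : Strat n)
    (hclus : MapClusterPt xbar atTop x)
    (hCPLD : ∀ I : Finset (Fin m ⊕ Fin p),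
      (∀ j ∈ I, Sum.elim g h j xbar = 0) →
      PosLinDep I (fun j => (fun ν => pgrad ν (Sum.elim g h j) xbar : Strat n)) →
      ∃ U ∈ 𝓝 xbar, ∀ y ∈ U,
        LinDep I (fun j => (fun ν => pgrad ν (Sum.elim g h j) y : Strat n))) :
    ((∀ i, g i xbar ≤ 0) ∧ (∀ j, h j xbar ≤ 0)) ∧
    ∀ (ν : Fin N) (z : EuclideanSpace ℝ (Fin (n ν))),
      (∀ i, g i (Function.update xbar ν z) ≤ 0) →
      (∀ j, h j (Function.update xbar ν z) ≤ 0) →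
      θ ν xbar ≤ θ ν (Function.update xbar ν z) :=
  stmt18_general θ g h hθ hgC1 hgconv hhC1 hhconv x lam mu u rho umax τ γ humax hτ hγ hrho0 hu0 hlam
    hu hrho eps eps' heps' hA1 hA2 heps hθconv hfeasible xbar hclus hCPLD
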